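/- arXiv:1004.1956 — 7 statements merged into one kernel-verified Lean document; each statement's English description precedes it below -/
import Mathlib

section
/- Let f be a multilinear polynomial of degree at most r in n variables, and let X = f(ε₁,…,εₙ) where ε₁,…,εₙ are independent uniform ±1 random variables. Then E[X⁴] ≤ 9^r · (E[X²])². -/
/-!
Induction on the number of variables. Splitting off the first variable writes
`f = g + ε₀ h` with `g` of degree at most `r` and `h` of degree at most `r - 1`, both functions of
the remaining variables. Averaging over `ε₀` kills the odd powers of `ε₀`, so
`E f² = E g² + E h²` and `E f⁴ = E g⁴ + 6 E g²h² + E h⁴`. By Cauchy–Schwarz and induction,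
`E g²h² ≤ √(E g⁴ E h⁴) ≤ 3 · 9^(r-1) E g² E h²`, and the three terms add up to at most
`9^r (E g² + E h²)²`.
-/

open Finset
open scoped BigOperators

theorem Finset.powerset_map {α β : Type*} (f : α ↪ β) (s : Finset α) :
    (s.map f).powerset = s.powerset.map (mapEmbedding f).toEmbedding := by
  ext t
  simp only [mem_powerset, subset_map_iff, mem_map]
  aesop

theorem Fin.sum_finset_succ {M : Type*} [AddCommMonoid M] {n : ℕ}
    (F : Finset (Fin (n + 1)) → M) :
    ∑ T, F T = ∑ S : Finset (Fin n), F (S.map (Fin.succEmb n)) +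
      ∑ S : Finset (Fin n), F (insert 0 (S.map (Fin.succEmb n))) := by
  rw [← powerset_univ, Fin.univ_succ, cons_eq_insert, sum_powerset_insert (by simp),
    powerset_map, sum_map, sum_map, powerset_univ]
  rfl

theorem Fin.expect_cons {α M : Type*} [Fintype α] [AddCommMonoid M] [Module ℚ≥0 M] {n : ℕ}
    (F : (Fin (n + 1) → α) → M) :
    𝔼 x, F x = 𝔼 y : Fin n → α, 𝔼 a, F (Fin.cons a y) := by
  rw [← Fintype.expect_equiv (Fin.consEquiv fun _ => α) (fun p => F (Fin.cons p.1 p.2)) F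
    fun _ => rfl, ← univ_product_univ, expect_product, expect_comm]

section Multilinear

variable {R : Type*} [CommSemiring R] {n r : ℕ}

def multilinearEval (c : Finset (Fin n) → R) (y : Fin n → R) : R :=
  ∑ S, c S * ∏ i ∈ S, y i

def succCoeff (c : Finset (Fin (n + 1)) → R) (S : Finset (Fin n)) : R :=
  c (S.map (Fin.succEmb n))

def insertZeroCoeff (c : Finset (Fin (n + 1)) → R) (S : Finset (Fin n)) : R :=
  c (insert 0 (S.map (Fin.succEmb n)))

theorem multilinearEval_cons (c : Finset (Fin (n + 1)) → R) (a : R) (y : Fin n → R) :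
    multilinearEval c (Fin.cons a y) =
      multilinearEval (succCoeff c) y + a * multilinearEval (insertZeroCoeff c) y := by
  rw [multilinearEval, Fin.sum_finset_succ, multilinearEval, multilinearEval, mul_sum]
  congr 1 <;> refine sum_congr rfl fun S _ => ?_
  · simp [succCoeff, prod_map]
  · rw [prod_insert (by simp), prod_map]
    simp only [insertZeroCoeff, Fin.coe_succEmb, Fin.cons_succ, Fin.cons_zero]
    ring

theorem multilinearEval_eq_of_forall_nonempty {c : Finset (Fin n) → R}
    (hc : ∀ S, S.Nonempty → c S = 0) (y : Fin n → R) : multilinearEval c y = c ∅ := by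
  rw [multilinearEval, sum_eq_single ∅ (fun S _ hS => by rw [hc S (nonempty_iff_ne_empty.2 hS),
    zero_mul]) (by simp)]
  simp

def DegreeLE (r : ℕ) (c : Finset (Fin n) → R) : Prop :=
  ∀ S, r < S.card → c S = 0

theorem DegreeLE.succCoeff {c : Finset (Fin (n + 1)) → R} (hc : DegreeLE r c) :
    DegreeLE r (succCoeff c) :=
  fun S hS => hc _ (by rwa [card_map])

theorem DegreeLE.insertZeroCoeff {c : Finset (Fin (n + 1)) → R} (hc : DegreeLE (r + 1) c) :
    DegreeLE r (insertZeroCoeff c) :=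
  fun S hS => hc _ (by rw [card_insert_of_notMem (by simp), card_map]; omega)

end Multilinear

def boolSign (b : Bool) : ℝ := if b then 1 else -1

theorem expect_add_boolSign_mul_sq (u v : ℝ) :
    𝔼 b : Bool, (u + boolSign b * v) ^ 2 = u ^ 2 + v ^ 2 := by
  rw [Fintype.expect_eq_sum_div_card, Fintype.sum_bool, Fintype.card_bool]
  simp only [boolSign, if_true, Bool.false_eq_true, if_false]
  ring

theorem expect_add_boolSign_mul_pow_four (u v : ℝ) :
    𝔼 b : Bool, (u + boolSign b * v) ^ 4 = u ^ 4 + 6 * (u ^ 2 * v ^ 2) + v ^ 4 := by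
  rw [Fintype.expect_eq_sum_div_card, Fintype.sum_bool, Fintype.card_bool]
  simp only [boolSign, if_true, Bool.false_eq_true, if_false]
  ring

theorem add_six_mul_add_le_of_moment_bounds {K a b G H C : ℝ} (hK : 0 ≤ K) (ha : 0 ≤ a)
    (hb : 0 ≤ b) (hH₀ : 0 ≤ H) (hG : G ≤ 9 * K * a ^ 2) (hH : H ≤ K * b ^ 2)
    (hC : C ^ 2 ≤ G * H) : G + 6 * C + H ≤ 9 * K * (a + b) ^ 2 := by
  have hC' : C ≤ 3 * K * a * b := by
    refine (le_abs_self C).trans (abs_le_of_sq_le_sq ?_ (by positivity))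
    calc C ^ 2 ≤ G * H := hC
      _ ≤ 9 * K * a ^ 2 * (K * b ^ 2) := mul_le_mul hG hH hH₀ (by positivity)
      _ = (3 * K * a * b) ^ 2 := by ring
  nlinarith [mul_nonneg hK (sq_nonneg b)]

theorem expect_pow_four_le_of_const {ι : Type*} [Fintype ι] [Nonempty ι] {F : ι → ℝ} {a : ℝ}
    (hF : ∀ x, F x = a) (r : ℕ) :
    𝔼 x, F x ^ 4 ≤ 9 ^ r * (𝔼 x, F x ^ 2) ^ 2 := by
  simp only [hF, Fintype.expect_const]
  nlinarith [one_le_pow₀ (by norm_num : (1 : ℝ) ≤ 9) (n := r), pow_nonneg (sq_nonneg a) 2]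

section BooleanCube

variable {n r : ℕ}

theorem expect_multilinearEval_sq_succ (c : Finset (Fin (n + 1)) → ℝ) :
    𝔼 x, multilinearEval c (boolSign ∘ x) ^ 2 =
      𝔼 y, multilinearEval (succCoeff c) (boolSign ∘ y) ^ 2 +
        𝔼 y, multilinearEval (insertZeroCoeff c) (boolSign ∘ y) ^ 2 := by
  simp only [Fin.expect_cons, Fin.comp_cons, multilinearEval_cons, expect_add_boolSign_mul_sq,
    expect_add_distrib]

theorem expect_multilinearEval_pow_four_succ (c : Finset (Fin (n + 1)) → ℝ) :
    𝔼 x, multilinearEval c (boolSign ∘ x) ^ 4 =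
      𝔼 y, multilinearEval (succCoeff c) (boolSign ∘ y) ^ 4 +
        6 * 𝔼 y, (multilinearEval (succCoeff c) (boolSign ∘ y) ^ 2 *
          multilinearEval (insertZeroCoeff c) (boolSign ∘ y) ^ 2) +
        𝔼 y, multilinearEval (insertZeroCoeff c) (boolSign ∘ y) ^ 4 := by
  simp only [Fin.expect_cons, Fin.comp_cons, multilinearEval_cons,
    expect_add_boolSign_mul_pow_four, expect_add_distrib, mul_expect]

theorem expect_multilinearEval_pow_four_le {c : Finset (Fin n) → ℝ} (hc : DegreeLE r c) :
    𝔼 x, multilinearEval c (boolSign ∘ x) ^ 4 ≤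
      9 ^ r * (𝔼 x, multilinearEval c (boolSign ∘ x) ^ 2) ^ 2 := by
  induction n generalizing r with
  | zero =>
    exact expect_pow_four_le_of_const (fun _ => multilinearEval_eq_of_forall_nonempty
      (fun S hS => by simp [eq_empty_of_isEmpty S] at hS) _) r
  | succ n ih =>
    cases r with
    | zero =>
      exact expect_pow_four_le_of_const
        (fun _ => multilinearEval_eq_of_forall_nonempty (fun S hS => hc S hS.card_pos) _) 0
    | succ r =>
      rw [expect_multilinearEval_pow_four_succ, expect_multilinearEval_sq_succ, pow_succ']
      refine add_six_mul_add_le_of_moment_bounds (by positivity)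
        (expect_nonneg fun _ _ => sq_nonneg _) (expect_nonneg fun _ _ => sq_nonneg _)
        (expect_nonneg fun _ _ => by positivity) ?_ (ih hc.insertZeroCoeff) ?_
      · simpa only [pow_succ', mul_assoc] using ih (r := r + 1) hc.succCoeff
      · exact (expect_mul_sq_le_sq_mul_sq univ
          (fun y => multilinearEval (succCoeff c) (boolSign ∘ y) ^ 2)
          (fun y => multilinearEval (insertZeroCoeff c) (boolSign ∘ y) ^ 2)).trans_eq
          (by simp only [← pow_mul])

end BooleanCube

theorem stmt1 (n r : ℕ) (coeff : Finset (Fin n) → ℝ)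
    (hdeg : ∀ S : Finset (Fin n), r < S.card → coeff S = 0) :
    let ε : (Fin n → Bool) → Fin n → ℝ := fun x i => if x i then 1 else -1
    let f : (Fin n → ℝ) → ℝ := fun y => ∑ S : Finset (Fin n), coeff S * ∏ i ∈ S, y i
    (∑ x : Fin n → Bool, (f (ε x)) ^ 4) / 2 ^ n ≤
      9 ^ r * ((∑ x : Fin n → Bool, (f (ε x)) ^ 2) / 2 ^ n) ^ 2 := by
  intro ε f
  have sum_div_eq_expect (F : (Fin n → Bool) → ℝ) : (∑ x, F x) / 2 ^ n = 𝔼 x, F x := by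
    simp [Fintype.expect_eq_sum_div_card]
  rw [sum_div_eq_expect, sum_div_eq_expect]
  exact expect_multilinearEval_pow_four_le (c := coeff) hdeg
end

section
/- Let (V,𝓒) be an instance of Linear Ordering with constraint multiset 𝓒 of ordered triples of distinct variables. Associate with each constraint (u,v,w) ∈ 𝓒 the arc (u,v) in A', the arc (v,w) in A'', and the betweenness constraint (v,{u,w}) in 𝓑. Then for every linear ordering α of V: dev(V,𝓒,α) = (dev(V,A',α) + dev(V,A'',α) + dev(V,𝓑,α))/2. -/
open scoped Classical

/-! Since the identity is linear in the constraint multiset, it suffices to check one constraint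
with positions `a, b, c`: if `a < b < c`, both arcs and the betweenness constraint are satisfied,
and otherwise exactly one of the three is. Hence
`2·[a < b < c] + 1 = [a < b] + [b < c] + [b between a and c]`, which sums to the claim. -/

theorem two_mul_ite_lt_lt_add_one {β : Type*} [LinearOrder β] {a b c : β}
    (hab : a ≠ b) (hbc : b ≠ c) :
    2 * (if a < b ∧ b < c then 1 else 0) + 1 =
      (if a < b then 1 else 0) + (if b < c then 1 else 0) +
        (if (a < b ∧ b < c) ∨ (c < b ∧ b < a) then 1 else 0 : ℕ) := by
  rcases hab.lt_or_gt with h₁ | h₁ <;> rcases hbc.lt_or_gt with h₂ | h₂ <;>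
    simp [h₁, h₂, h₁.asymm, h₂.asymm]

theorem Multiset.two_mul_countP_add_card_eq {ι : Type*} (s : Multiset ι)
    (p q₁ q₂ q₃ : ι → Prop) [DecidablePred p] [DecidablePred q₁] [DecidablePred q₂]
    [DecidablePred q₃]
    (h : ∀ x ∈ s, 2 * (if p x then 1 else 0) + 1 =
      (if q₁ x then 1 else 0) + (if q₂ x then 1 else 0) + (if q₃ x then 1 else 0 : ℕ)) :
    2 * s.countP p + card s = s.countP q₁ + s.countP q₂ + s.countP q₃ := by
  induction s using Multiset.induction_on with
  | empty => simp
  | cons x s ih =>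
    have hx := h x (mem_cons_self x s)
    have hs := ih fun y hy => h y (mem_cons_of_mem hy)
    simp only [countP_cons, card_cons]
    omega

theorem stmt6 {V : Type*} (α : V → ℝ) (hα : Function.Injective α)
    (𝓒 : Multiset (V × V × V))
    (hd : ∀ c ∈ 𝓒, c.1 ≠ c.2.1 ∧ c.1 ≠ c.2.2 ∧ c.2.1 ≠ c.2.2) :
    let satC : V × V × V → Prop := fun c => α c.1 < α c.2.1 ∧ α c.2.1 < α c.2.2
    let satA : V × V → Prop := fun a => α a.1 < α a.2
    let satB : V × V × V → Prop := fun c =>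
      (α c.2.1 < α c.1 ∧ α c.1 < α c.2.2) ∨ (α c.2.2 < α c.1 ∧ α c.1 < α c.2.1)
    let A' := 𝓒.map (fun c => (c.1, c.2.1))
    let A'' := 𝓒.map (fun c => (c.2.1, c.2.2))
    let 𝓑 := 𝓒.map (fun c => (c.2.1, c.1, c.2.2))
    ((𝓒.filter satC).card : ℝ) - (𝓒.card : ℝ) / 6 =
      ((((A'.filter satA).card : ℝ) - (A'.card : ℝ) / 2) +
       (((A''.filter satA).card : ℝ) - (A''.card : ℝ) / 2) +
       (((𝓑.filter satB).card : ℝ) - (𝓑.card : ℝ) / 3)) / 2 := by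
  intro satC satA satB A' A'' 𝓑
  have key := Multiset.two_mul_countP_add_card_eq 𝓒 satC (satA ∘ fun c => (c.1, c.2.1))
    (satA ∘ fun c => (c.2.1, c.2.2)) (satB ∘ fun c => (c.2.1, c.1, c.2.2)) fun c hc => by
      obtain ⟨h₁₂, -, h₂₃⟩ := hd c hc
      convert two_mul_ite_lt_lt_add_one (hα.ne h₁₂) (hα.ne h₂₃) <;> rfl
  simp only [A', A'', 𝓑, Multiset.filter_map, Multiset.card_map,
    ← Multiset.countP_eq_card_filter]
  have key' := congrArg (Nat.cast : ℕ → ℝ) key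
  push_cast at key'
  linarith
end

section
/- Let D=(V,A) be a reduced directed multigraph (no pair of mutually opposite arcs) with m arcs. For a uniformly random φ: V → {0,1,2,3}, define X = Σ_{a=(u,v)∈A} X_a where X_a = 1/2 if φ(u)<φ(v), X_a = −1/2 if φ(u)>φ(v), and X_a = 0 if φ(u)=φ(v). Then E[X²] ≥ m/32. -/
/-!
Write `s(i, j) ∈ {1/2, -1/2, 0}` for the contribution of an arc with end labels `i, j`.
Its Hoeffding decomposition is `s(i, j) = f(j) - f(i) + r(i, j)`, where `f(j) = (2j - 3)/8` is
the average of `s(i, j)` over `i` and `r` has zero row and column sums. Accordingly `X = L + R`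
with `L` the `f`-part and `R = ∑ₐ r(φ a.1, φ a.2)`. Summing out one free endpoint kills every
product `f(φ w) · r(φ x, φ y)`, and every product `r_a · r_b` for which `b` has an endpoint outside
`a`; for distinct arcs of a reduced loopless multigraph this is always the case. Hence
`E[X²] ≥ E[2LR + R²] = E[R²] ≥ m · E[r²] = m/32`.
-/

open Finset Function

section UpdateSum

variable {V α : Type*} [Fintype V] [DecidableEq V] [Fintype α]

theorem card_smul_sum_eq_sum_sum_update {M : Type*} [AddCommMonoid M] (w : V)
    (h : (V → α) → M) :
    Fintype.card α • ∑ φ, h φ = ∑ φ, ∑ c, h (update φ w c) := by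
  let e := Equiv.funSplitAt w α
  have hupd : ∀ d c ψ, update (e.symm (d, ψ)) w c = e.symm (c, ψ) := by
    intro d c ψ
    funext j
    by_cases hj : j = w
    · subst hj; simp [e]
    · simp [e, hj]
  rw [← e.symm.sum_comp, ← e.symm.sum_comp, Fintype.sum_prod_type, Fintype.sum_prod_type]
  simp only [hupd, sum_const, card_univ, Finset.smul_sum]
  rw [Finset.sum_comm]

theorem card_sq_mul_sum_apply_apply {K : Type*} [CommSemiring K] {u v : V} (huv : u ≠ v)
    (g : α → α → K) :
    (Fintype.card α : K) ^ 2 * ∑ φ : V → α, g (φ u) (φ v)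
      = (Fintype.card α : K) ^ Fintype.card V * ∑ i, ∑ j, g i j := by
  have hu := card_smul_sum_eq_sum_sum_update u (fun φ : V → α => g (φ u) (φ v))
  have hv := card_smul_sum_eq_sum_sum_update v (fun φ : V → α => ∑ i, g i (φ v))
  simp only [nsmul_eq_mul, update_self, update_of_ne huv.symm] at hu hv
  rw [sq, mul_assoc, hu, hv, sum_const, card_univ, Fintype.card_fun, nsmul_eq_mul,
    Finset.sum_comm (s := univ) (t := univ) (f := fun j i => g i j)]
  push_cast; rfl

theorem sum_mul_eq_zero_of_sum_update_eq_zero {K : Type*} [Field K] [CharZero K] (w : V)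
    {G H : (V → α) → K} (hG : ∀ φ c, G (update φ w c) = G φ)
    (hH : ∀ φ, ∑ c, H (update φ w c) = 0) :
    ∑ φ, G φ * H φ = 0 := by
  rcases isEmpty_or_nonempty α with _ | _
  · have : IsEmpty (V → α) := ⟨fun φ => isEmptyElim (φ w)⟩
    exact Fintype.sum_empty _
  have h := card_smul_sum_eq_sum_sum_update w (fun φ => G φ * H φ)
  simp only [hG, ← Finset.mul_sum, hH, mul_zero, sum_const_zero] at h
  simpa [Fintype.card_ne_zero] using h

end UpdateSum

def IsDegenerate {α M : Type*} [Fintype α] [AddCommMonoid M] (r : α → α → M) : Prop :=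
  (∀ j, ∑ i, r i j = 0) ∧ ∀ i, ∑ j, r i j = 0

theorem Finset.sum_multiset_sum_mul_multiset_sum {ι β K : Type*} [CommSemiring K]
    (s : Finset ι) (A B : Multiset β) (p q : β → ι → K) :
    ∑ i ∈ s, (A.map (p · i)).sum * (B.map (q · i)).sum
      = (A.map fun a => (B.map fun b => ∑ i ∈ s, p a i * q b i).sum).sum := by
  simp_rw [← Multiset.sum_map_mul_right, ← Multiset.sum_map_mul_left, ← Multiset.sum_map_sum]

def arcSum {V α M : Type*} [AddCommMonoid M] (A : Multiset (V × V)) (t : α → α → M)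
    (φ : V → α) : M :=
  (A.map fun a => t (φ a.1) (φ a.2)).sum

section DegenerateKernel

variable {V α K : Type*} [Fintype V] [DecidableEq V] [Fintype α] [Field K] [CharZero K]
  {r : α → α → K}

theorem IsDegenerate.sum_mul_eq_zero (hr : IsDegenerate r) {x y w : V} (hxy : x ≠ y)
    (hw : w = x ∨ w = y) {G : (V → α) → K} (hG : ∀ φ c, G (update φ w c) = G φ) :
    ∑ φ, G φ * r (φ x) (φ y) = 0 := by
  refine sum_mul_eq_zero_of_sum_update_eq_zero w hG fun φ => ?_
  rcases hw with rfl | rfl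
  · simpa [update_of_ne hxy.symm] using hr.1 (φ y)
  · simpa [update_of_ne hxy] using hr.2 (φ x)

theorem IsDegenerate.sum_apply_mul_eq_zero (hr : IsDegenerate r) (g : α → K) (v : V)
    {x y : V} (hxy : x ≠ y) :
    ∑ φ : V → α, g (φ v) * r (φ x) (φ y) = 0 := by
  by_cases hvx : v = x
  · exact hr.sum_mul_eq_zero hxy (Or.inr rfl) fun φ c => by
      rw [update_of_ne (hvx ▸ hxy)]
  · exact hr.sum_mul_eq_zero hxy (Or.inl rfl) fun φ c => by rw [update_of_ne hvx]

theorem IsDegenerate.sum_mul_eq_zero_of_not_mem (hr : IsDegenerate r) {u v x y : V}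
    (hxy : x ≠ y) (h : (x ≠ u ∧ x ≠ v) ∨ (y ≠ u ∧ y ≠ v)) :
    ∑ φ : V → α, r (φ u) (φ v) * r (φ x) (φ y) = 0 := by
  rcases h with ⟨hu, hv⟩ | ⟨hu, hv⟩
  · exact hr.sum_mul_eq_zero hxy (Or.inl rfl) fun φ c => by
      rw [update_of_ne hu.symm, update_of_ne hv.symm]
  · exact hr.sum_mul_eq_zero hxy (Or.inr rfl) fun φ c => by
      rw [update_of_ne hu.symm, update_of_ne hv.symm]

theorem IsDegenerate.sum_arcSum_sub_mul_arcSum_eq_zero (hr : IsDegenerate r)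
    {A : Multiset (V × V)} (hA : ∀ a ∈ A, a.1 ≠ a.2) (B : Multiset (V × V)) (g : α → K) :
    ∑ φ, arcSum B (fun i j => g j - g i) φ * arcSum A r φ = 0 := by
  simp only [arcSum, Finset.sum_multiset_sum_mul_multiset_sum, sub_mul, Finset.sum_sub_distrib]
  refine Multiset.sum_eq_zero fun _ hb => ?_
  obtain ⟨b, -, rfl⟩ := Multiset.mem_map.1 hb
  refine Multiset.sum_eq_zero fun _ ha => ?_
  obtain ⟨a, haA, rfl⟩ := Multiset.mem_map.1 ha
  rw [hr.sum_apply_mul_eq_zero _ _ (hA a haA), hr.sum_apply_mul_eq_zero _ _ (hA a haA), sub_zero]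

variable [LinearOrder K] [IsStrictOrderedRing K]

theorem IsDegenerate.sum_sum_sq_le_sum_arcSum_sq (hr : IsDegenerate r) {A : Multiset (V × V)}
    (hA : ∀ a ∈ A, a.1 ≠ a.2) (hred : ∀ u v : V, (u, v) ∈ A → (v, u) ∉ A) :
    (A.map fun a => ∑ φ : V → α, r (φ a.1) (φ a.2) ^ 2).sum ≤ ∑ φ, arcSum A r φ ^ 2 := by
  have hpair : ∀ a ∈ A, ∀ b ∈ A, ∑ φ : V → α, r (φ a.1) (φ a.2) * r (φ b.1) (φ b.2)
      = if a = b then ∑ φ : V → α, r (φ a.1) (φ a.2) * r (φ a.1) (φ a.2) else 0 := by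
    intro a ha b hb
    split_ifs with hab
    · rw [hab]
    · refine hr.sum_mul_eq_zero_of_not_mem (hA b hb) ?_
      -- otherwise `b` would be `a` or its reverse
      have := hA a ha
      have := hA b hb
      have := hred a.1 a.2 ha
      grind
  simp only [arcSum, sq, Finset.sum_multiset_sum_mul_multiset_sum]
  refine Multiset.sum_map_le_sum_map _ _ fun a ha => ?_
  rw [Multiset.map_congr rfl (hpair a ha)]
  refine Multiset.single_le_sum (fun x hx => ?_) _ (Multiset.mem_map.2 ⟨a, ha, if_pos rfl⟩)
  obtain ⟨b, -, rfl⟩ := Multiset.mem_map.1 hx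
  split_ifs
  · exact Finset.sum_nonneg fun φ _ => mul_self_nonneg _
  · exact le_rfl

end DegenerateKernel

def halfSign (i j : Fin 4) : ℚ := if i < j then 1 / 2 else if j < i then -(1 / 2) else 0

def halfSignMean (j : Fin 4) : ℚ := (2 * (j : ℚ) - 3) / 8

def halfSignResidual (i j : Fin 4) : ℚ := halfSign i j - (halfSignMean j - halfSignMean i)

theorem isDegenerate_halfSignResidual : IsDegenerate halfSignResidual := by
  constructor <;> intro i <;> fin_cases i <;>
    simp [Fin.sum_univ_four, halfSignResidual, halfSign, halfSignMean] <;> norm_num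

theorem sum_sum_halfSignResidual_sq : ∑ i, ∑ j, halfSignResidual i j ^ 2 = 1 / 2 := by
  simp [Fin.sum_univ_four, halfSignResidual, halfSign, halfSignMean]
  norm_num

theorem stmt12 {V : Type*} [Fintype V] [DecidableEq V]
    (A : Multiset (V × V)) (hd : ∀ a ∈ A, a.1 ≠ a.2)
    (hred : ∀ u v : V, (u, v) ∈ A → (v, u) ∉ A) :
    let X : (V → Fin 4) → ℚ := fun φ =>
      (A.map (fun a =>
        if φ a.1 < φ a.2 then (1 : ℚ)/2 else if φ a.2 < φ a.1 then -(1/2) else 0)).sum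
    ((A.card : ℚ) / 32) * 4 ^ (Fintype.card V) ≤ ∑ φ : V → Fin 4, (X φ) ^ 2 := by
  intro X
  set L := arcSum A fun i j => halfSignMean j - halfSignMean i
  set R := arcSum A halfSignResidual
  have hX : ∀ φ, X φ = L φ + R φ := fun φ => by
    simp only [X, L, R, arcSum, ← Multiset.sum_map_add, halfSignResidual, halfSign,
      add_sub_cancel]
  have hLR : ∑ φ, L φ * R φ = 0 :=
    isDegenerate_halfSignResidual.sum_arcSum_sub_mul_arcSum_eq_zero hd A halfSignMean
  have hdiag : ∀ a ∈ A, ∑ φ : V → Fin 4, halfSignResidual (φ a.1) (φ a.2) ^ 2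
      = 4 ^ Fintype.card V / 32 := fun a ha => by
    have h := card_sq_mul_sum_apply_apply (hd a ha) (fun i j => halfSignResidual i j ^ 2)
    simp only [sum_sum_halfSignResidual_sq, Fintype.card_fin] at h
    linarith
  calc ((A.card : ℚ) / 32) * 4 ^ (Fintype.card V)
      = (A.map fun a => ∑ φ : V → Fin 4, halfSignResidual (φ a.1) (φ a.2) ^ 2).sum := by
        rw [Multiset.map_congr rfl hdiag, Multiset.map_const', Multiset.sum_replicate,
          nsmul_eq_mul]
        ring
    _ ≤ ∑ φ, R φ ^ 2 := isDegenerate_halfSignResidual.sum_sum_sq_le_sum_arcSum_sq hd hred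
    _ = ∑ φ, (2 * (L φ * R φ) + R φ ^ 2) := by
        rw [Finset.sum_add_distrib, ← Finset.mul_sum, hLR, mul_zero, zero_add]
    _ ≤ ∑ φ, X φ ^ 2 := Finset.sum_le_sum fun φ _ => by rw [hX]; nlinarith [sq_nonneg (L φ)]
end

section
/- Let (V,𝓑) be a reduced instance of Betweenness (no complete 3-sets of constraints) with m constraints. For a uniformly random φ: V → {0,1,2,3}, define Y = Σ_{B∈𝓑} Y_B, where for B=(v,{u,w}): Y_B = 0 if φ(u)=φ(v)=φ(w); Y_B = −1/3 if φ(v)≠φ(u)=φ(w); Y_B = 1/6 if φ(v) equals exactly one of φ(u),φ(w); Y_B = 2/3 if φ(u),φ(v),φ(w) are distinct with φ(v) strictly between φ(u) and φ(w); and Y_B = −1/3 if φ(u),φ(v),φ(w) are distinct with φ(v) not between φ(u) and φ(w). Then E[Y²] ≥ 11m/768. -/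
/-!
Write `96 · Y_B = T_B + L_B`, where `T_B` is a function of `(φ u, φ v, φ w)` whose sum over
each argument vanishes (the top Efron–Stein component) and `L_B` is a sum of functions of two of
the three variables. Under the uniform measure `T_B` is orthogonal to every `L_B'` and to every
`T_B'` whose constraint lives on a different set of variables, so `E[(96 Y)²] ≥ E[(Σ T_B)²]`.
The latter is `132` times a quadratic form on each block of constraints sharing a variable set,
with weight `2` for equal middles and `-1` otherwise. In a reduced instance a block uses at most
two middles, and Cauchy–Schwarz then bounds the form by the size of the block, which gives
`E[(96 Y)²] ≥ 132 m`.
-/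

open Finset Function

section Assignments

variable {V α M : Type*} [Fintype V] [DecidableEq V] [Fintype α]

theorem sum_sum_update [AddCommMonoid M] (z : V) (H : (V → α) → M) :
    ∑ φ : V → α, ∑ t, H (update φ z t) = Fintype.card α • ∑ φ, H φ := by
  have hinv : Involutive fun p : (V → α) × α => (update p.1 z p.2, p.1 z) := by
    rintro ⟨φ, t⟩
    simp
  rw [← Fintype.sum_prod_type',
    Fintype.sum_bijective _ hinv.bijective _ (fun p => H p.1) fun _ => rfl]
  simp [Fintype.sum_prod_type, smul_sum]

theorem card_pow_three_smul_sum_comp₃ [AddCommMonoid M] {u v w : V} (huv : u ≠ v) (huw : u ≠ w)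
    (hvw : v ≠ w) (G : α → α → α → M) :
    Fintype.card α ^ 3 • ∑ φ : V → α, G (φ u) (φ v) (φ w) =
      Fintype.card α ^ Fintype.card V • ∑ a, ∑ b, ∑ d, G a b d := by
  have hw : ∑ φ : V → α, ∑ d, G (φ u) (φ v) d =
      Fintype.card α • ∑ φ : V → α, G (φ u) (φ v) (φ w) := by
    rw [← sum_sum_update w]
    simp [update_of_ne huw, update_of_ne hvw]
  have hv : ∑ φ : V → α, ∑ b, ∑ d, G (φ u) b d =
      Fintype.card α • ∑ φ : V → α, ∑ d, G (φ u) (φ v) d := by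
    rw [← sum_sum_update v]
    simp [update_of_ne huv]
  have hu : ∑ _φ : V → α, ∑ a, ∑ b, ∑ d, G a b d =
      Fintype.card α • ∑ φ : V → α, ∑ b, ∑ d, G (φ u) b d := by
    rw [← sum_sum_update u]
    simp
  rw [sum_const, card_univ, Fintype.card_fun] at hu
  rw [hu, hv, hw, pow_succ, pow_succ, pow_one, mul_smul, mul_smul]

def ZeroMarginals [AddCommMonoid M] (f : α → α → α → M) : Prop :=
  (∀ b d, ∑ a, f a b d = 0) ∧ (∀ a d, ∑ b, f a b d = 0) ∧ (∀ a b, ∑ d, f a b d = 0)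

theorem sum_mul_eq_zero_of_zeroMarginals {R : Type*} [NonUnitalNonAssocSemiring R]
    [IsAddTorsionFree R] {f : α → α → α → R} (hf : ZeroMarginals f) {u v w : V} (huv : u ≠ v)
    (huw : u ≠ w) (hvw : v ≠ w) {g : (V → α) → R} {s : Finset V} (hg : DependsOn g s)
    (hs : ¬ {u, v, w} ⊆ s) :
    ∑ φ : V → α, f (φ u) (φ v) (φ w) * g φ = 0 := by
  obtain ⟨z, hz, hzs⟩ := not_subset.mp hs
  have hgz (φ : V → α) (t : α) : g (update φ z t) = g φ :=
    hg fun i hi => update_of_ne (ne_of_mem_of_not_mem hi hzs) t φ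
  have hfiber (φ : V → α) : ∑ t, f (update φ z t u) (update φ z t v)
      (update φ z t w) * g (update φ z t) = 0 := by
    simp only [hgz, ← sum_mul]
    rw [mem_insert, mem_insert, mem_singleton] at hz
    rcases hz with rfl | rfl | rfl
    · simp [update_of_ne huv.symm, update_of_ne huw.symm, hf.1]
    · simp [update_of_ne huv, update_of_ne hvw.symm, hf.2.1]
    · simp [update_of_ne huw, update_of_ne hvw, hf.2.2]
  have h := sum_sum_update z fun φ => f (φ u) (φ v) (φ w) * g φ
  rw [sum_eq_zero fun φ _ => hfiber φ] at h
  rcases isEmpty_or_nonempty α with _ | _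
  · have : IsEmpty (V → α) := ⟨fun φ => IsEmpty.false (φ u)⟩
    simp
  · exact (nsmul_eq_zero_iff_right Fintype.card_ne_zero).mp h.symm

end Assignments

theorem card_le_sum_sum_ite_of_card_image_le_two {ι β : Type*} [DecidableEq β] (S : Finset ι)
    (f : ι → β) (h : #(S.image f) ≤ 2) :
    (#S : ℤ) ≤ ∑ i ∈ S, ∑ j ∈ S, if f i = f j then 2 else -1 := by
  set n : β → ℤ := fun x => #{i ∈ S | f i = x}
  have hcard : (#S : ℤ) = ∑ x ∈ S.image f, n x := by
    rw [card_eq_sum_card_image f S]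
    push_cast
    rfl
  have hrow (i : ι) : ∑ j ∈ S, (if f i = f j then (2 : ℤ) else -1) = 3 * n (f i) - #S := by
    have (j : ι) :
        (if f i = f j then (2 : ℤ) else -1) = 3 * (if f j = f i then 1 else 0) - 1 := by
      split_ifs <;> simp_all
    rw [sum_congr rfl fun j _ => this j, sum_sub_distrib, ← mul_sum, sum_boole]
    simp [n]
  have hsq : ∑ i ∈ S, n (f i) = ∑ x ∈ S.image f, n x ^ 2 := by
    rw [sum_comp]
    simp [sq, n]
  have hCS : (∑ x ∈ S.image f, n x) ^ 2 ≤ 2 * ∑ x ∈ S.image f, n x ^ 2 :=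
    sq_sum_le_card_mul_sum_sq.trans
      (mul_le_mul_of_nonneg_right (by exact_mod_cast h) (sum_nonneg fun _ _ => sq_nonneg _))
  have hself : ∑ x ∈ S.image f, n x ≤ ∑ x ∈ S.image f, n x ^ 2 :=
    sum_le_sum fun x _ => by
      have : (0 : ℤ) ≤ n x := by positivity
      nlinarith
  rw [sum_congr rfl fun i _ => hrow i, sum_sub_distrib, ← mul_sum, hsq, sum_const, nsmul_eq_mul,
    hcard]
  nlinarith

namespace Betweenness

section Constraints

variable {V α R : Type*} [DecidableEq V]

def scope (c : V × V × V) : Finset V := {c.1, c.2.1, c.2.2}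

def DistinctVars (c : V × V × V) : Prop := c.1 ≠ c.2.1 ∧ c.1 ≠ c.2.2 ∧ c.2.1 ≠ c.2.2

theorem DistinctVars.card_scope {c : V × V × V} (hc : DistinctVars c) : #(scope c) = 3 :=
  card_eq_three.mpr ⟨_, _, _, hc.1, hc.2.1, hc.2.2, rfl⟩

theorem DistinctVars.eq_or_eq_of_scope_eq {c : V × V × V} (hc : DistinctVars c) {y z : V}
    (h : scope c = {c.1, y, z}) : c = (c.1, y, z) ∨ c = (c.1, z, y) := by
  obtain ⟨v, u, w⟩ := c
  obtain ⟨hvu, hvw, huw⟩ := hc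
  have hu : u ∈ ({v, y, z} : Finset V) := h ▸ by simp [scope]
  have hw : w ∈ ({v, y, z} : Finset V) := h ▸ by simp [scope]
  simp only [mem_insert, mem_singleton] at hu hw
  rcases hu with rfl | rfl | rfl <;> rcases hw with rfl | rfl | rfl <;> simp_all

theorem DistinctVars.eq_perm_of_scope_eq {c c' : V × V × V} (hc' : DistinctVars c')
    (h : scope c' = scope c) :
    c' = (c.1, c.2.1, c.2.2) ∨ c' = (c.1, c.2.2, c.2.1) ∨ c' = (c.2.1, c.1, c.2.2) ∨
      c' = (c.2.1, c.2.2, c.1) ∨ c' = (c.2.2, c.1, c.2.1) ∨ c' = (c.2.2, c.2.1, c.1) := by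
  obtain ⟨v, u, w⟩ := c
  have h1 : c'.1 ∈ scope (v, u, w) := h ▸ mem_insert_self _ _
  simp only [scope, mem_insert, mem_singleton] at h1
  rcases h1 with e | e | e
  · have := hc'.eq_or_eq_of_scope_eq (y := u) (z := w) (by rw [h, e]; rfl)
    rw [e] at this
    tauto
  · have := hc'.eq_or_eq_of_scope_eq (y := v) (z := w) (by rw [h, e, scope, insert_comm])
    rw [e] at this
    tauto
  · have := hc'.eq_or_eq_of_scope_eq (y := v) (z := u)
      (by rw [h, e, scope, pair_comm, insert_comm])
    rw [e] at this
    tauto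

def constraintTerm (f : α → α → α → R) (c : V × V × V) (φ : V → α) : R :=
  f (φ c.2.1) (φ c.1) (φ c.2.2)

theorem dependsOn_constraintTerm (f : α → α → α → R) (c : V × V × V) :
    DependsOn (constraintTerm f c) (scope c : Set V) := fun φ ψ h => by
  simp [constraintTerm, h c.1 (by simp [scope]), h c.2.1 (by simp [scope]),
    h c.2.2 (by simp [scope])]

variable [Fintype V] [Fintype α] [NonUnitalNonAssocSemiring R] [IsAddTorsionFree R]
  {f : α → α → α → R}

theorem sum_constraintTerm_mul_eq_zero (hf : ZeroMarginals f) {c : V × V × V}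
    (hc : DistinctVars c) {g : (V → α) → R} {s : Finset V} (hg : DependsOn g s)
    (hs : ¬ scope c ⊆ s) :
    ∑ φ, constraintTerm f c φ * g φ = 0 := by
  have hs' : ¬ {c.2.1, c.1, c.2.2} ⊆ s := by rwa [insert_comm]
  exact sum_mul_eq_zero_of_zeroMarginals hf (Ne.symm hc.1) hc.2.2 hc.2.1 hg hs'

theorem sum_constraintTerm_mul_comp₂_eq_zero (hf : ZeroMarginals f) {c : V × V × V}
    (hc : DistinctVars c) (q : α → α → R) (x y : V) :
    ∑ φ : V → α, constraintTerm f c φ * q (φ x) (φ y) = 0 := by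
  refine sum_constraintTerm_mul_eq_zero hf hc (s := {x, y}) (fun φ ψ h => ?_) fun hsub => ?_
  · simp [h x (by simp), h y (by simp)]
  · have := (card_le_card hsub).trans card_le_two
    rw [hc.card_scope] at this
    omega

theorem sum_constraintTerm_mul_constraintTerm_eq_zero (hf : ZeroMarginals f)
    (g : α → α → α → R) {c c' : V × V × V} (hc : DistinctVars c) (hc' : DistinctVars c')
    (h : scope c ≠ scope c') :
    ∑ φ, constraintTerm f c φ * constraintTerm g c' φ = 0 :=
  sum_constraintTerm_mul_eq_zero hf hc (dependsOn_constraintTerm g c') fun hsub =>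
    h (eq_of_subset_of_card_le hsub (by rw [hc.card_scope, hc'.card_scope]))

end Constraints

section Blocks

variable {V ι : Type*} [DecidableEq V]

def middles [Fintype ι] (B : ι → V × V × V) (K : Finset V) : Finset V :=
  image (fun i => (B i).1) {i | scope (B i) = K}

def correlationWeight (c c' : V × V × V) : ℤ :=
  if scope c = scope c' then if c.1 = c'.1 then 2 else -1 else 0

theorem card_le_sum_sum_correlationWeight [Fintype V] [Fintype ι] (B : ι → V × V × V)
    (hB : ∀ K, #(middles B K) ≤ 2) :
    (Fintype.card ι : ℤ) ≤ ∑ i, ∑ j, correlationWeight (B i) (B j) := by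
  have hrow (K : Finset V) (i : ι) (hi : i ∈ ({i | scope (B i) = K} : Finset ι)) :
      ∑ j, correlationWeight (B i) (B j) =
        ∑ j ∈ {j | scope (B j) = K}, if (B i).1 = (B j).1 then 2 else -1 := by
    rw [sum_filter]
    refine sum_congr rfl fun j _ => ?_
    simp only [correlationWeight, (mem_filter.mp hi).2, @eq_comm _ K]
  rw [← sum_fiberwise (univ : Finset ι) (fun i => scope (B i)), Fintype.card,
    card_eq_sum_card_fiberwise (t := (univ : Finset (Finset V))) fun _ _ => mem_univ _]
  push_cast
  exact sum_le_sum fun K _ => (sum_congr rfl (hrow K)).symm ▸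
    card_le_sum_sum_ite_of_card_image_le_two _ _ (hB K)

def IsReduced (C : Set (V × V × V)) : Prop :=
  ∀ u v w, ¬ (((u, v, w) ∈ C ∨ (u, w, v) ∈ C) ∧ ((v, u, w) ∈ C ∨ (v, w, u) ∈ C) ∧
    ((w, u, v) ∈ C ∨ (w, v, u) ∈ C))

theorem IsReduced.card_middles_le_two [Fintype ι] {C : Set (V × V × V)} (hC : IsReduced C)
    {B : ι → V × V × V} (hBC : ∀ i, B i ∈ C) (hB : ∀ i, DistinctVars (B i)) (K : Finset V) :
    #(middles B K) ≤ 2 := by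
  by_contra! hcard
  obtain ⟨_, hx⟩ : (middles B K).Nonempty := card_pos.mp (by omega)
  obtain ⟨i, hi, -⟩ := mem_image.mp hx
  have hsub : middles B K ⊆ K := fun _ hv => by
    obtain ⟨j, hj, rfl⟩ := mem_image.mp hv
    exact (mem_filter.mp hj).2 ▸ mem_insert_self _ _
  have hK : scope (B i) = K := (mem_filter.mp hi).2
  have hK3 : #K = 3 := hK ▸ (hB i).card_scope
  have himage : middles B K = K := eq_of_subset_of_card_le hsub (by omega)
  have hmid (v : V) (hv : v ∈ K) : ∃ j, scope (B j) = K ∧ (B j).1 = v := by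
    obtain ⟨j, hj, hjv⟩ := mem_image.mp (himage ▸ hv)
    exact ⟨j, (mem_filter.mp hj).2, hjv⟩
  -- All three variables of `K` occur as middles, so the constraints form a complete 3-set.
  rcases hBi : B i with ⟨x, y, z⟩
  rw [hBi] at hK
  obtain ⟨j, hjK, hjy⟩ := hmid y (hK ▸ by simp [scope])
  obtain ⟨k, hkK, hkz⟩ := hmid z (hK ▸ by simp [scope])
  have hj := (hB j).eq_or_eq_of_scope_eq (y := x) (z := z)
    (by rw [hjK, ← hK, hjy, scope, insert_comm])
  have hk := (hB k).eq_or_eq_of_scope_eq (y := x) (z := y)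
    (by rw [hkK, ← hK, hkz, scope, pair_comm, insert_comm])
  rw [hjy] at hj
  rw [hkz] at hk
  have hmem (l : ι) {c : V × V × V} (e : B l = c) : c ∈ C := e ▸ hBC l
  exact hC x y z ⟨Or.inl (hmem i hBi), hj.imp (hmem j) (hmem j), hk.imp (hmem k) (hmem k)⟩

end Blocks

section Score

/-- `96 · Y_B` as a function of `(φ u, φ v, φ w)` for the constraint `B = (v, {u, w})`. -/
def score : Fin 4 → Fin 4 → Fin 4 → ℤ := fun a b d =>
  if a = b ∧ b = d then 0
  else if a = d then -32
  else if b = a ∨ b = d then 16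
  else if (a < b ∧ b < d) ∨ (d < b ∧ b < a) then 64 else -32

theorem ninetySix_mul_eq_score (a b d : Fin 4) :
    96 * (if a = b ∧ b = d then (0 : ℚ)
      else if a = d then -(1/3)
      else if b = a ∨ b = d then 1/6
      else if (a < b ∧ b < d) ∨ (d < b ∧ b < a) then 2/3 else -(1/3)) = score a b d := by
  unfold score
  split_ifs <;> norm_num

/-- The top Efron–Stein component of `score`: the part orthogonal to every function of at most
two of its three arguments. -/
def topScore : Fin 4 → Fin 4 → Fin 4 → ℤ :=
  ![![![0, 20, -4, -16], ![-40, -4, 28, 16], ![8, -20, -4, 16], ![32, 4, -20, -16]],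
    ![![20, 8, -8, -20], ![-4, 0, 8, -4], ![-20, -16, 8, 28], ![4, 8, -8, -4]],
    ![![-4, -8, 8, 4], ![28, 8, -16, -20], ![-4, 8, 0, -4], ![-20, -8, 8, 20]],
    ![![-16, -20, 4, 32], ![16, -4, -20, 8], ![16, 28, -4, -40], ![-16, -4, 20, 0]]]

def lowScore₁₂ : Fin 4 → Fin 4 → ℤ :=
  ![![24, 16, -8, -8], ![-8, 0, -8, -8], ![-8, -8, 0, -8], ![-8, -8, 16, 24]]

def lowScore₁₃ : Fin 4 → Fin 4 → ℤ :=
  ![![-30, -14, 10, 34], ![-2, -18, -2, 22], ![22, -2, -18, -2], ![34, 10, -14, -30]]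

def lowScore₂₃ : Fin 4 → Fin 4 → ℤ :=
  ![![6, -14, -14, -26], ![22, 18, 10, -2], ![-2, 10, 18, 22], ![-26, -14, -14, 6]]

theorem score_eq (a b d : Fin 4) :
    score a b d = topScore a b d + lowScore₁₂ a b + lowScore₁₃ a d + lowScore₂₃ b d := by
  revert a b d
  decide

theorem zeroMarginals_topScore : ZeroMarginals topScore := by
  refine ⟨?_, ?_, ?_⟩ <;> decide

end Score

variable {V : Type*}

def totalScore {ι : Type*} [Fintype ι] (B : ι → V × V × V) (φ : V → Fin 4) : ℤ :=
  ∑ i, constraintTerm score (B i) φ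

def lowTerm (c : V × V × V) (φ : V → Fin 4) : ℤ :=
  lowScore₁₂ (φ c.2.1) (φ c.1) + lowScore₁₃ (φ c.2.1) (φ c.2.2) + lowScore₂₃ (φ c.1) (φ c.2.2)

theorem constraintTerm_score (c : V × V × V) (φ : V → Fin 4) :
    constraintTerm score c φ = constraintTerm topScore c φ + lowTerm c φ := by
  rw [constraintTerm, score_eq, constraintTerm, lowTerm]
  ring

variable [DecidableEq V] [Fintype V]

theorem sum_topScore_mul_lowTerm {c : V × V × V} (hc : DistinctVars c)
    (c' : V × V × V) : ∑ φ, constraintTerm topScore c φ * lowTerm c' φ = 0 := by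
  simp only [lowTerm, mul_add, sum_add_distrib,
    sum_constraintTerm_mul_comp₂_eq_zero zeroMarginals_topScore hc, add_zero]

theorem sum_topScore_mul_topScore {c c' : V × V × V} (hc : DistinctVars c)
    (hc' : DistinctVars c') :
    64 * ∑ φ, constraintTerm topScore c φ * constraintTerm topScore c' φ =
      4 ^ Fintype.card V * (8448 * correlationWeight c c') := by
  by_cases hs : scope c = scope c'
  swap
  · rw [sum_constraintTerm_mul_constraintTerm_eq_zero zeroMarginals_topScore _ hc hc' hs]
    simp [correlationWeight, hs]
  have hsum (G : Fin 4 → Fin 4 → Fin 4 → ℤ) (k : ℤ) (hk : ∑ a, ∑ b, ∑ d, G a b d = k) :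
      64 * ∑ φ : V → Fin 4, G (φ c.2.1) (φ c.1) (φ c.2.2) = 4 ^ Fintype.card V * k := by
    simpa [hk] using card_pow_three_smul_sum_comp₃ (α := Fin 4) hc.1.symm hc.2.2 hc.2.1 G
  obtain ⟨v, u, w⟩ := c
  obtain ⟨hvu, hvw, huw⟩ := hc
  rcases hc'.eq_perm_of_scope_eq hs.symm with rfl | rfl | rfl | rfl | rfl | rfl <;>
    simp only [correlationWeight, hs, if_true, hvu, hvw, if_false]
  · exact hsum (fun a b d => topScore a b d * topScore a b d) _ (by decide)
  · exact hsum (fun a b d => topScore a b d * topScore d b a) _ (by decide)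
  · exact hsum (fun a b d => topScore a b d * topScore b a d) _ (by decide)
  · exact hsum (fun a b d => topScore a b d * topScore d a b) _ (by decide)
  · exact hsum (fun a b d => topScore a b d * topScore b d a) _ (by decide)
  · exact hsum (fun a b d => topScore a b d * topScore a d b) _ (by decide)

theorem le_sum_sq_totalScore {ι : Type*} [Fintype ι] (B : ι → V × V × V)
    (hB : ∀ i, DistinctVars (B i))
    (hmid : ∀ K, #(middles B K) ≤ 2) :
    132 * Fintype.card ι * 4 ^ Fintype.card V ≤
      ∑ φ : V → Fin 4, totalScore B φ ^ 2 := by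
  set W : (V → Fin 4) → ℤ := fun φ => ∑ i, constraintTerm topScore (B i) φ
  set L : (V → Fin 4) → ℤ := fun φ => ∑ i, lowTerm (B i) φ
  have hsplit (φ : V → Fin 4) : totalScore B φ = W φ + L φ := by
    simp only [totalScore, W, L, constraintTerm_score, sum_add_distrib]
  have horth : ∑ φ, W φ * L φ = 0 := by
    simp only [W, L, sum_mul_sum]
    rw [sum_comm]
    refine sum_eq_zero fun i _ => ?_
    rw [sum_comm]
    exact sum_eq_zero fun j _ => sum_topScore_mul_lowTerm (hB i) (B j)
  have hW : 64 * ∑ φ, W φ ^ 2 =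
      4 ^ Fintype.card V * 8448 * ∑ i, ∑ j, correlationWeight (B i) (B j) := by
    simp only [W, sq, sum_mul_sum]
    rw [sum_comm, mul_sum, mul_sum]
    refine sum_congr rfl fun i _ => ?_
    rw [sum_comm, mul_sum, mul_sum]
    refine sum_congr rfl fun j _ => ?_
    rw [sum_topScore_mul_topScore (hB i) (hB j)]
    ring
  have hcard := card_le_sum_sum_correlationWeight B hmid
  have hpow : (0 : ℤ) < 4 ^ Fintype.card V := by positivity
  calc 132 * (Fintype.card ι : ℤ) * 4 ^ Fintype.card V ≤ ∑ φ, W φ ^ 2 := by nlinarith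
    _ ≤ ∑ φ, (W φ + L φ) ^ 2 := by
      have hexp : ∑ φ, (W φ + L φ) ^ 2 = ∑ φ, W φ ^ 2 + 2 * ∑ φ, W φ * L φ + ∑ φ, L φ ^ 2 := by
        simp only [add_sq, sum_add_distrib, mul_sum, mul_assoc]
      rw [hexp, horth]
      linarith [sum_nonneg fun φ (_ : φ ∈ univ) => sq_nonneg (L φ)]
    _ = _ := by simp only [hsplit]

end Betweenness

/-- A betweenness constraint is stored as `(v, u, w)`, meaning "`v` is between `u` and `w`". -/
theorem stmt13 {V : Type*} [Fintype V] [DecidableEq V]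
    (𝓑 : Multiset (V × V × V))
    (hd : ∀ c ∈ 𝓑, c.1 ≠ c.2.1 ∧ c.1 ≠ c.2.2 ∧ c.2.1 ≠ c.2.2)
    (hred : ∀ u v w : V,
      ¬ (((u, v, w) ∈ 𝓑 ∨ (u, w, v) ∈ 𝓑) ∧ ((v, u, w) ∈ 𝓑 ∨ (v, w, u) ∈ 𝓑) ∧
         ((w, u, v) ∈ 𝓑 ∨ (w, v, u) ∈ 𝓑))) :
    let YB : (V → Fin 4) → V × V × V → ℚ := fun φ c =>
      if φ c.2.1 = φ c.1 ∧ φ c.1 = φ c.2.2 then 0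
      else if φ c.2.1 = φ c.2.2 then -(1/3)
      else if φ c.1 = φ c.2.1 ∨ φ c.1 = φ c.2.2 then 1/6
      else if (φ c.2.1 < φ c.1 ∧ φ c.1 < φ c.2.2) ∨ (φ c.2.2 < φ c.1 ∧ φ c.1 < φ c.2.1)
        then 2/3 else -(1/3)
    let Y : (V → Fin 4) → ℚ := fun φ => (𝓑.map (YB φ)).sum
    ((11 * 𝓑.card : ℚ) / 768) * 4 ^ (Fintype.card V) ≤ ∑ φ : V → Fin 4, (Y φ) ^ 2 := by
  intro YB Y
  have hY (φ : V → Fin 4) :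
      96 * Y φ = (Betweenness.totalScore (fun c : 𝓑 => (c : V × V × V)) φ : ℚ) := by
    simp only [Y, ← Multiset.map_univ, Betweenness.totalScore]
    rw [← sum_eq_multiset_sum, mul_sum]
    push_cast
    exact sum_congr rfl fun c _ => Betweenness.ninetySix_mul_eq_score _ _ _
  have hbound := Betweenness.le_sum_sq_totalScore (fun c : 𝓑 => (c : V × V × V))
    (fun c => hd c Multiset.coe_mem)
    (Betweenness.IsReduced.card_middles_le_two (C := {c | c ∈ 𝓑}) hred
      (fun _ => Multiset.coe_mem) fun c => hd c Multiset.coe_mem)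
  have hsq : 9216 * ∑ φ, Y φ ^ 2 =
      ((∑ φ, Betweenness.totalScore (fun c : 𝓑 => (c : V × V × V)) φ ^ 2 : ℤ) : ℚ) := by
    push_cast
    simp only [← hY, mul_sum]
    ring_nf
  have hcast := (Int.cast_le (R := ℚ)).mpr hbound
  rw [← hsq, Multiset.card_coe] at hcast
  push_cast at hcast
  linarith
end

section
/- With the setup of the key construction (arcs X'_p for (u,v), X''_p for (v,w), betweenness Y_p for (v,{u,w}), and Z_p for linear ordering constraint (u,v,w)), for every function φ: V → {0,1,2,3} and every p, Z_p = (X'_p + X''_p + Y_p)/2, where each quantity is the conditional satisfaction probability under a random φ-compatible ordering minus the corresponding average (1/2, 1/2, 1/3, 1/6). -/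
/-!
Pointwise, for positions `a ≠ b ≠ c` in a linear order,
`[a < b < c] + 1 = [a < b] + [b < c] + [c < b < a]`, and betweenness of `b` is the disjoint union
of `a < b < c` and `c < b < a`. Averaging these identities over the (nonempty) set of
`φ`-compatible orderings gives the claimed relation between the biases.
-/

open scoped Classical

open Finset

section Counting

variable {ι α : Type*} [LinearOrder α] (S : Finset ι) (a b c : ι → α)

lemma ite_lt_lt_add_one {x y z : α} (hxy : x ≠ y) (hyz : y ≠ z) :
    ((if x < y ∧ y < z then 1 else 0) + 1 : ℕ) =
      (if x < y then 1 else 0) + (if y < z then 1 else 0) + (if z < y ∧ y < x then 1 else 0) := by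
  rcases hxy.lt_or_gt with h | h <;> rcases hyz.lt_or_gt with h' | h' <;>
    simp [h, h', h.not_gt, h'.not_gt]

lemma card_filter_lt_lt_add_card (hab : ∀ i ∈ S, a i ≠ b i) (hbc : ∀ i ∈ S, b i ≠ c i) :
    #{i ∈ S | a i < b i ∧ b i < c i} + #S =
      #{i ∈ S | a i < b i} + #{i ∈ S | b i < c i} + #{i ∈ S | c i < b i ∧ b i < a i} := by
  simp only [card_filter]
  rw [card_eq_sum_ones, ← sum_add_distrib, ← sum_add_distrib, ← sum_add_distrib]
  exact sum_congr rfl fun i hi => ite_lt_lt_add_one (hab i hi) (hbc i hi)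

lemma card_filter_between :
    #{i ∈ S | (a i < b i ∧ b i < c i) ∨ (c i < b i ∧ b i < a i)} =
      #{i ∈ S | a i < b i ∧ b i < c i} + #{i ∈ S | c i < b i ∧ b i < a i} := by
  rw [filter_or, card_union_of_disjoint]
  exact disjoint_filter.2 fun i _ h h' => lt_asymm h.1 h'.2

lemma linearOrdering_bias_eq (hS : S.Nonempty) (hab : ∀ i ∈ S, a i ≠ b i)
    (hbc : ∀ i ∈ S, b i ≠ c i) :
    (#{i ∈ S | a i < b i ∧ b i < c i} : ℚ) / #S - 1/6 =
      ((#{i ∈ S | a i < b i} / #S - 1/2) + (#{i ∈ S | b i < c i} / #S - 1/2) +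
        (#{i ∈ S | (a i < b i ∧ b i < c i) ∨ (c i < b i ∧ b i < a i)} / #S - 1/3)) / 2 := by
  have hcount : (#{i ∈ S | a i < b i ∧ b i < c i} + #S : ℚ) =
      #{i ∈ S | a i < b i} + #{i ∈ S | b i < c i} + #{i ∈ S | c i < b i ∧ b i < a i} := by
    exact_mod_cast card_filter_lt_lt_add_card S a b c hab hbc
  have hS' : (#S : ℚ) ≠ 0 := by positivity
  rw [card_filter_between, Nat.cast_add]
  field_simp
  linear_combination 36 * hcount

end Counting

lemma exists_equiv_fin_monotone {V α : Type*} [Fintype V] [LinearOrder α] (f : V → α) :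
    ∃ π : V ≃ Fin (Fintype.card V), ∀ x y, π x < π y → f x ≤ f y := by
  let e := Fintype.equivFin V
  refine ⟨e.trans (Tuple.sort (f ∘ e.symm)).symm, fun x y h => ?_⟩
  have := Tuple.monotone_sort (f ∘ e.symm) h.le
  simpa only [Function.comp_apply, Equiv.trans_apply, Equiv.apply_symm_apply,
    Equiv.symm_apply_apply] using this

theorem stmt14_general {V : Type*} [Fintype V] [DecidableEq V]
    (u v w : V) (huv : u ≠ v) (hvw : v ≠ w) (φ : V → Fin 4) :
    let compat : (V ≃ Fin (Fintype.card V)) → Prop :=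
      fun π => ∀ x y, π x < π y → φ x ≤ φ y
    let prob : ((V ≃ Fin (Fintype.card V)) → Prop) → ℚ := fun p =>
      ((Finset.univ.filter (fun π => compat π ∧ p π)).card : ℚ) /
        ((Finset.univ.filter (fun π => compat π)).card : ℚ)
    prob (fun π => π u < π v ∧ π v < π w) - 1/6 =
      ((prob (fun π => π u < π v) - 1/2) + (prob (fun π => π v < π w) - 1/2) +
        (prob (fun π => (π u < π v ∧ π v < π w) ∨ (π w < π v ∧ π v < π u)) - 1/3)) / 2 := by
  intro compat prob
  obtain ⟨π₀, hπ₀⟩ := exists_equiv_fin_monotone φ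
  have hne : (univ.filter compat).Nonempty := ⟨π₀, mem_filter.2 ⟨mem_univ _, hπ₀⟩⟩
  simp only [prob, ← filter_filter]
  convert linearOrdering_bias_eq _ (fun π => π u) (fun π => π v) (fun π => π w) hne
    (fun π _ => π.injective.ne huv) (fun π _ => π.injective.ne hvw)

theorem stmt14 {V : Type*} [Fintype V] [DecidableEq V]
    (u v w : V) (huv : u ≠ v) (huw : u ≠ w) (hvw : v ≠ w) (φ : V → Fin 4) :
    let compat : (V ≃ Fin (Fintype.card V)) → Prop :=
      fun π => ∀ x y, π x < π y → φ x ≤ φ y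
    let prob : ((V ≃ Fin (Fintype.card V)) → Prop) → ℚ := fun p =>
      ((Finset.univ.filter (fun π => compat π ∧ p π)).card : ℚ) /
        ((Finset.univ.filter (fun π => compat π)).card : ℚ)
    prob (fun π => π u < π v ∧ π v < π w) - 1/6 =
      ((prob (fun π => π u < π v) - 1/2) + (prob (fun π => π v < π w) - 1/2) +
        (prob (fun π => (π u < π v ∧ π v < π w) ∨ (π w < π v ∧ π v < π u)) - 1/3)) / 2 :=
  stmt14_general u v w huv hvw φ
end

section
/- In the setting of Lemma on second moments for Linear Ordering-AA: with φ uniform over functions V → {0,1,2,3}, the cross-covariance between any arc variable X_i and any betweenness variable Y_j vanishes: E[X_i Y_j] = 0. Consequently E[Z²] = E[X²] + E[Y²]/4 where Z = X + Y/2. -/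
/-!
Reversing every value, `φ ↦ 3 - φ`, is a bijection of the colourings `V → Fin 4` that negates each
arc variable and fixes each betweenness variable. Any product of an odd and an even function
therefore sums to zero over all colourings, which kills the cross term in `E[(X + Y/2)²]`.
-/

open Finset

section OddEven

variable {α : Type*} [Fintype α] (e : α ≃ α)

theorem Fintype.sum_eq_zero_of_comp_equiv_eq_neg {M : Type*} [AddCommGroup M] [IsAddTorsionFree M]
    {f : α → M} (hf : ∀ x, f (e x) = -f x) : ∑ x, f x = 0 := by
  rw [← self_eq_neg]
  calc ∑ x, f x = ∑ x, f (e x) := (e.sum_comp f).symm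
    _ = -∑ x, f x := by simp only [hf, sum_neg_distrib]

variable {R : Type*} [CommRing R] [IsAddTorsionFree R] {f g : α → R}

theorem Fintype.sum_mul_eq_zero_of_odd_of_even (hf : ∀ x, f (e x) = -f x)
    (hg : ∀ x, g (e x) = g x) : ∑ x, f x * g x = 0 :=
  Fintype.sum_eq_zero_of_comp_equiv_eq_neg e fun x => by rw [hf, hg, neg_mul]

theorem Fintype.sum_add_sq_of_odd_of_even (hf : ∀ x, f (e x) = -f x) (hg : ∀ x, g (e x) = g x) :
    ∑ x, (f x + g x) ^ 2 = ∑ x, f x ^ 2 + ∑ x, g x ^ 2 := by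
  calc ∑ x, (f x + g x) ^ 2 = ∑ x, (f x ^ 2 + g x ^ 2) + 2 * ∑ x, f x * g x := by
        rw [mul_sum, ← sum_add_distrib]
        exact Fintype.sum_congr _ _ fun x => by ring
    _ = ∑ x, f x ^ 2 + ∑ x, g x ^ 2 := by
        rw [Fintype.sum_mul_eq_zero_of_odd_of_even e hf hg, mul_zero, add_zero, sum_add_distrib]

end OddEven

section Reversal

variable {n : ℕ}

def arcValue (x y : Fin n) : ℚ :=
  if x < y then 1/2 else if y < x then -(1/2) else 0

def betweennessValue (b a c : Fin n) : ℚ :=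
  if a = b ∧ b = c then 0
  else if a = c then -(1/3)
  else if b = a ∨ b = c then 1/6
  else if (a < b ∧ b < c) ∨ (c < b ∧ b < a) then 2/3 else -(1/3)

theorem arcValue_rev (x y : Fin n) : arcValue x.rev y.rev = -arcValue x y := by
  unfold arcValue
  simp only [Fin.rev_lt_rev]
  rcases lt_trichotomy x y with h | rfl | h
  · simp [h, not_lt_of_gt h]
  · simp
  · simp [h, not_lt_of_gt h]

theorem betweennessValue_rev (b a c : Fin n) :
    betweennessValue b.rev a.rev c.rev = betweennessValue b a c := by
  unfold betweennessValue
  simp only [Fin.rev_inj, Fin.rev_lt_rev]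
  simp only [show b < a ∧ c < b ∨ b < c ∧ a < b ↔ a < b ∧ b < c ∨ c < b ∧ b < a by tauto]

def Fin.revPi (V : Type*) (n : ℕ) : Equiv.Perm (V → Fin n) :=
  Equiv.piCongrRight fun _ => Fin.revPerm

end Reversal

/-- A betweenness constraint is stored as `(b, a, c)`, meaning "`b` is between `a` and `c`". -/
theorem stmt15 {V : Type*} [Fintype V] [DecidableEq V] :
    let Xa : (V → Fin 4) → V × V → ℚ := fun φ a =>
      if φ a.1 < φ a.2 then 1/2 else if φ a.2 < φ a.1 then -(1/2) else 0
    let Yb : (V → Fin 4) → V × V × V → ℚ := fun φ c =>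
      if φ c.2.1 = φ c.1 ∧ φ c.1 = φ c.2.2 then 0
      else if φ c.2.1 = φ c.2.2 then -(1/3)
      else if φ c.1 = φ c.2.1 ∨ φ c.1 = φ c.2.2 then 1/6
      else if (φ c.2.1 < φ c.1 ∧ φ c.1 < φ c.2.2) ∨ (φ c.2.2 < φ c.1 ∧ φ c.1 < φ c.2.1)
        then 2/3 else -(1/3)
    (∀ a : V × V, a.1 ≠ a.2 → ∀ c : V × V × V,
      (c.1 ≠ c.2.1 ∧ c.1 ≠ c.2.2 ∧ c.2.1 ≠ c.2.2) →
      ∑ φ : V → Fin 4, Xa φ a * Yb φ c = 0) ∧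
    (∀ A : Multiset (V × V), (∀ a ∈ A, a.1 ≠ a.2) →
      ∀ 𝓑 : Multiset (V × V × V),
        (∀ c ∈ 𝓑, c.1 ≠ c.2.1 ∧ c.1 ≠ c.2.2 ∧ c.2.1 ≠ c.2.2) →
      ∑ φ : V → Fin 4, ((A.map (Xa φ)).sum + (𝓑.map (Yb φ)).sum / 2) ^ 2 =
        (∑ φ : V → Fin 4, ((A.map (Xa φ)).sum) ^ 2) +
          (∑ φ : V → Fin 4, ((𝓑.map (Yb φ)).sum) ^ 2) / 4) := by
  intro Xa Yb
  have hX (φ : V → Fin 4) : Xa (Fin.revPi V 4 φ) = fun a => -Xa φ a :=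
    funext fun a => arcValue_rev (φ a.1) (φ a.2)
  have hY (φ : V → Fin 4) : Yb (Fin.revPi V 4 φ) = Yb φ :=
    funext fun c => betweennessValue_rev (φ c.1) (φ c.2.1) (φ c.2.2)
  refine ⟨fun a _ c _ => Fintype.sum_mul_eq_zero_of_odd_of_even (Fin.revPi V 4)
    (fun φ => congrFun (hX φ) a) (fun φ => congrFun (hY φ) c), fun A _ 𝓑 _ => ?_⟩
  rw [Fintype.sum_add_sq_of_odd_of_even (Fin.revPi V 4)
    (fun φ => by rw [hX, Multiset.sum_map_neg]) (fun φ => by rw [hY])]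
  simp only [div_pow, ← sum_div]
  norm_num
end

section
/- The graphs G_i defined recursively (G_0 is the complete symmetric digraph on 3 vertices decomposed into 2 directed triangles; G_i obtained from two copies of G_{i−1} by replacing one triangle from each copy by six new triangles c₁,…,c₆ as specified) satisfy: |V_i| = 3·2^i, G_i is a symmetric digraph without parallel arcs, and for every nonempty proper subset C*_i of the triangle decomposition C_i, the union of the arcs of the triangles in C*_i is not a symmetric digraph. -/
/-- The vertex set of the recursively constructed graph `G_i`. -/
def Vt : ℕ → Type
  | 0 => Fin 3
  | (i+1) => Vt i ⊕ Vt i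

instance VtDecEq : (i : ℕ) → DecidableEq (Vt i)
  | 0 => inferInstanceAs (DecidableEq (Fin 3))
  | (i+1) => @instDecidableEqSum _ _ (VtDecEq i) (VtDecEq i)

instance VtFintype : (i : ℕ) → Fintype (Vt i)
  | 0 => inferInstanceAs (Fintype (Fin 3))
  | (i+1) => @instFintypeSum _ _ (VtFintype i) (VtFintype i)

/-- The triangle decomposition `C_i` of `G_i`: a directed triangle `u v w u` is stored as
`(u, v, w)`. At each step the chosen triangle in each of the two copies is the first one. -/
def Ct : (i : ℕ) → List (Vt i × Vt i × Vt i)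
  | 0 => [((0 : Fin 3), (1 : Fin 3), (2 : Fin 3)), ((2 : Fin 3), (1 : Fin 3), (0 : Fin 3))]
  | (i+1) =>
    match Ct i with
    | [] => []
    | (a, b, c) :: rest =>
      (rest.map fun t => ((Sum.inl t.1 : Vt (i+1)), Sum.inl t.2.1, Sum.inl t.2.2)) ++
      (rest.map fun t => ((Sum.inr t.1 : Vt (i+1)), Sum.inr t.2.1, Sum.inr t.2.2)) ++
      [ ((Sum.inl a : Vt (i+1)), Sum.inl b, Sum.inr c),
        ((Sum.inl b : Vt (i+1)), Sum.inl c, Sum.inr b),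
        ((Sum.inl c : Vt (i+1)), Sum.inl a, Sum.inr a),
        ((Sum.inr a : Vt (i+1)), Sum.inr b, Sum.inl c),
        ((Sum.inr b : Vt (i+1)), Sum.inr c, Sum.inl b),
        ((Sum.inr c : Vt (i+1)), Sum.inr a, Sum.inl a) ]

/-- The arcs of the directed triangle `u v w u` stored as `(u, v, w)`. -/
def arcOf {A : Type*} (t : A × A × A) (p : A × A) : Prop :=
  p = (t.1, t.2.1) ∨ p = (t.2.1, t.2.2) ∨ p = (t.2.2, t.1)

/-- The list of all arcs of a list of directed triangles. -/
def arcList {A : Type*} (L : List (A × A × A)) : List (A × A) :=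
  L.flatMap fun t => [(t.1, t.2.1), (t.2.1, t.2.2), (t.2.2, t.1)]

/-! Call a list of directed triangles an irreducible decomposition when its arcs are pairwise
distinct and closed under reversal, each triangle has three distinct vertices, and the triangles
are connected under the relation "t' carries the reverse of an arc of t". Since every arc lies on
exactly one triangle, connectedness says precisely that no nonempty proper subfamily has a
symmetric arc set.

Irreducibility passes from `C_{i-1}` to `C_i`. The arcs of `C_i` are those of the two copies of
`C_{i-1}` together with twelve arcs between the copies, which pair up among the six new triangles;
so the arc conditions are inherited. The new triangles form a reversal cycle
`c₁ c₅ c₂ c₄ c₃ c₆`, and inside the left copy `c₁, c₂, c₃` carry the arcs of the removed triangle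
`c`, so a reversal-closed family meeting the left copy contains all of it together with the new
triangles; the right copy follows by exchanging the two copies. -/

open Sum

section Triangles

variable {α β : Type*}

def triMap (f : α → β) (t : α × α × α) : β × β × β := (f t.1, f t.2.1, f t.2.2)

lemma arcOf_triMap (f : α → β) {t : α × α × α} {u v : α} (h : arcOf t (u, v)) :
    arcOf (triMap f t) (f u, f v) := by
  rcases h with h | h | h <;> simp only [Prod.mk.injEq] at h <;> simp [arcOf, triMap, h]

lemma arcList_nil : arcList ([] : List (α × α × α)) = [] := rfl

lemma arcList_cons (t : α × α × α) (L : List (α × α × α)) :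
    arcList (t :: L) = [(t.1, t.2.1), (t.2.1, t.2.2), (t.2.2, t.1)] ++ arcList L := rfl

lemma arcList_append (L₁ L₂ : List (α × α × α)) :
    arcList (L₁ ++ L₂) = arcList L₁ ++ arcList L₂ := List.flatMap_append

lemma arcList_map_triMap (f : α → β) (L : List (α × α × α)) :
    arcList (L.map (triMap f)) = (arcList L).map (Prod.map f f) := by
  simp [arcList, triMap, List.flatMap_map, List.map_flatMap]; rfl

lemma mem_arcList {L : List (α × α × α)} {p : α × α} :
    p ∈ arcList L ↔ ∃ t ∈ L, arcOf t p := by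
  simp [arcList, arcOf]

lemma eq_of_arcOf_of_nodup {L : List (α × α × α)} (h : (arcList L).Nodup) {t t' : α × α × α}
    (ht : t ∈ L) (ht' : t' ∈ L) {p : α × α} (hp : arcOf t p) (hp' : arcOf t' p) : t = t' := by
  by_contra hne
  have : Std.Symm (Function.onFun List.Disjoint
      fun t : α × α × α => [(t.1, t.2.1), (t.2.1, t.2.2), (t.2.2, t.1)]) := ⟨fun _ _ h => h.symm⟩
  exact (List.nodup_flatMap.1 h).2.forall ht ht' hne (by simpa [arcOf] using hp)
    (by simpa [arcOf] using hp')

def RevClosed (L : List (α × α × α)) (P : α × α × α → Prop) : Prop :=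
  ∀ t ∈ L, ∀ t' ∈ L, ∀ u v, arcOf t (u, v) → arcOf t' (v, u) → P t → P t'

lemma RevClosed.comp {L : List (α × α × α)} {L' : List (β × β × β)} {P : β × β × β → Prop}
    (hP : RevClosed L' P) (f : α → β) (hf : ∀ t ∈ L, triMap f t ∈ L') :
    RevClosed L (P ∘ triMap f) := fun t ht t' ht' u v h h' =>
  hP _ (hf t ht) _ (hf t' ht') (f u) (f v) (arcOf_triMap f h) (arcOf_triMap f h')

structure IrreducibleDecomp (L : List (α × α × α)) : Prop where
  nodup : (arcList L).Nodup
  symm : ∀ p ∈ arcList L, (p.2, p.1) ∈ arcList L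
  ne : ∀ t ∈ L, t.1 ≠ t.2.1 ∧ t.2.1 ≠ t.2.2 ∧ t.2.2 ≠ t.1
  connected : ∀ P, RevClosed L P → (∃ t ∈ L, P t) → ∀ t ∈ L, P t

lemma irreducibleDecomp_pair {a b c : α} (hab : a ≠ b) (hbc : b ≠ c) (hca : c ≠ a) :
    IrreducibleDecomp [(a, b, c), (c, b, a)] where
  nodup := by simp [arcList, hab, hbc, hca, hab.symm, hbc.symm, hca.symm]
  symm := by simp [arcList]
  ne := by simp [hab, hbc, hca, hab.symm, hbc.symm, hca.symm]
  connected P hP := by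
    have h₁ := hP (a, b, c) (by simp) (c, b, a) (by simp) a b (by simp [arcOf]) (by simp [arcOf])
    have h₂ := hP (c, b, a) (by simp) (a, b, c) (by simp) b a (by simp [arcOf]) (by simp [arcOf])
    simp only [List.mem_cons, List.not_mem_nil, or_false, exists_eq_or_imp, exists_eq_left,
      forall_eq_or_imp, forall_eq]
    tauto

theorem IrreducibleDecomp.exists_arcOf_not_reversed [DecidableEq α] {L : List (α × α × α)}
    (h : IrreducibleDecomp L) {S : Finset (α × α × α)} (hS : S ⊆ L.toFinset) (hne : S.Nonempty)
    (hSL : S ≠ L.toFinset) :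
    ∃ u v : α, (∃ t ∈ S, arcOf t (u, v)) ∧ ¬ ∃ t ∈ S, arcOf t (v, u) := by
  by_contra! hsymm
  have hP : RevClosed L (· ∈ S) := by
    intro t ht t' ht' u v huv hvu htS
    obtain ⟨t'', ht''S, hvu''⟩ := hsymm u v ⟨t, htS, huv⟩
    rwa [eq_of_arcOf_of_nodup h.nodup ht' (List.mem_toFinset.1 (hS ht''S)) hvu hvu'']
  obtain ⟨t, ht⟩ := hne
  exact hSL <| hS.antisymm fun t' ht' =>
    h.connected _ hP ⟨t, List.mem_toFinset.1 (hS ht), ht⟩ t' (List.mem_toFinset.1 ht')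

end Triangles

section Glue

variable {α : Type*}

def gadget (a b c : α) : List ((α ⊕ α) × (α ⊕ α) × (α ⊕ α)) :=
  [(inl a, inl b, inr c), (inl b, inl c, inr b), (inl c, inl a, inr a),
   (inr a, inr b, inl c), (inr b, inr c, inl b), (inr c, inr a, inl a)]

def glue (a b c : α) (rest : List (α × α × α)) : List ((α ⊕ α) × (α ⊕ α) × (α ⊕ α)) :=
  rest.map (triMap inl) ++ rest.map (triMap inr) ++ gadget a b c

-- The arcs of the gadget other than the lifts `(inl u, inl v)`, `(inr u, inr v)` of the arcs
-- `(u, v)` of the removed triangle `(a, b, c)`.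
def crossArcs (a b c : α) : List ((α ⊕ α) × (α ⊕ α)) :=
  [(inl b, inr c), (inr c, inl a), (inl c, inr b), (inr b, inl b), (inl a, inr a), (inr a, inl c),
   (inr b, inl c), (inl c, inr a), (inr c, inl b), (inl b, inr b), (inr a, inl a), (inl a, inr c)]

variable {a b c : α} {rest : List (α × α × α)}

lemma arcList_glue_perm :
    (arcList (glue a b c rest)).Perm ((arcList ((a, b, c) :: rest)).map (Prod.map inl inl) ++
      (arcList ((a, b, c) :: rest)).map (Prod.map inr inr) ++ crossArcs a b c) := by
  classical
  refine (@List.perm_iff_count _ instBEqOfDecidableEq _ _ _).2 fun p => ?_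
  simp [glue, gadget, crossArcs, arcList_append, arcList_map_triMap, arcList_cons,
    List.count_cons, arcList_nil]
  omega

lemma mem_glue {t : (α ⊕ α) × (α ⊕ α) × (α ⊕ α)} :
    t ∈ glue a b c rest ↔ (∃ s ∈ rest, triMap inl s = t) ∨ (∃ s ∈ rest, triMap inr s = t) ∨
      t ∈ gadget a b c := by
  simp only [glue, List.mem_append, List.mem_map, or_assoc]

lemma triMap_inl_mem_glue {t : α × α × α} (ht : t ∈ rest) : triMap inl t ∈ glue a b c rest :=
  mem_glue.2 (Or.inl ⟨t, ht, rfl⟩)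

lemma mem_glue_of_mem_gadget {t : (α ⊕ α) × (α ⊕ α) × (α ⊕ α)} (ht : t ∈ gadget a b c) :
    t ∈ glue a b c rest :=
  mem_glue.2 (Or.inr (Or.inr ht))

lemma triMap_swap_mem_glue {t : (α ⊕ α) × (α ⊕ α) × (α ⊕ α)} (ht : t ∈ glue a b c rest) :
    triMap Sum.swap t ∈ glue a b c rest := by
  rcases mem_glue.1 ht with ⟨s, hs, rfl⟩ | ⟨s, hs, rfl⟩ | ht
  · exact mem_glue.2 (Or.inr (Or.inl ⟨s, hs, rfl⟩))
  · exact mem_glue.2 (Or.inl ⟨s, hs, rfl⟩)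
  · simp only [gadget, List.mem_cons, List.not_mem_nil, or_false] at ht
    rcases ht with rfl | rfl | rfl | rfl | rfl | rfl <;> simp [glue, gadget, triMap]

lemma IrreducibleDecomp.head_notMem_tail (h : IrreducibleDecomp ((a, b, c) :: rest)) :
    (a, b, c) ∉ rest := fun hmem =>
  List.disjoint_of_nodup_append h.nodup (List.mem_cons_self ..)
    (mem_arcList.2 ⟨(a, b, c), hmem, Or.inl rfl⟩)

-- Consecutive gadget triangles share an arc in opposite directions: c₁ c₅ c₂ c₄ c₃ c₆ c₁.
lemma RevClosed.imp_of_mem_gadget {P} (hP : RevClosed (glue a b c rest) P) :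
    ∀ d ∈ gadget a b c, ∀ d' ∈ gadget a b c, P d → P d' := by
  have step : ∀ d ∈ gadget a b c, ∀ d' ∈ gadget a b c, ∀ u v,
      arcOf d (u, v) → arcOf d' (v, u) → P d → P d' := fun d hd d' hd' =>
    hP d (mem_glue_of_mem_gadget hd) d' (mem_glue_of_mem_gadget hd')
  have h₁₅ := step (inl a, inl b, inr c) (by simp [gadget]) (inr b, inr c, inl b) (by simp [gadget])
    (inl b) (inr c) (by simp [arcOf]) (by simp [arcOf])
  have h₅₂ := step (inr b, inr c, inl b) (by simp [gadget]) (inl b, inl c, inr b) (by simp [gadget])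
    (inl b) (inr b) (by simp [arcOf]) (by simp [arcOf])
  have h₂₄ := step (inl b, inl c, inr b) (by simp [gadget]) (inr a, inr b, inl c) (by simp [gadget])
    (inl c) (inr b) (by simp [arcOf]) (by simp [arcOf])
  have h₄₃ := step (inr a, inr b, inl c) (by simp [gadget]) (inl c, inl a, inr a) (by simp [gadget])
    (inl c) (inr a) (by simp [arcOf]) (by simp [arcOf])
  have h₃₆ := step (inl c, inl a, inr a) (by simp [gadget]) (inr c, inr a, inl a) (by simp [gadget])
    (inl a) (inr a) (by simp [arcOf]) (by simp [arcOf])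
  have h₆₁ := step (inr c, inr a, inl a) (by simp [gadget]) (inl a, inl b, inr c) (by simp [gadget])
    (inl a) (inr c) (by simp [arcOf]) (by simp [arcOf])
  simp only [gadget, List.mem_cons, List.not_mem_nil, or_false]
  rintro d (rfl | rfl | rfl | rfl | rfl | rfl) d' (rfl | rfl | rfl | rfl | rfl | rfl) <;> tauto

lemma IrreducibleDecomp.glue_left_copy (h : IrreducibleDecomp ((a, b, c) :: rest)) {P}
    (hP : RevClosed (glue a b c rest) P)
    (hstart : P (inl a, inl b, inr c) ∨ ∃ t ∈ rest, P (triMap inl t)) :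
    P (inl a, inl b, inr c) ∧ ∀ t ∈ rest, P (triMap inl t) := by
  have hc₁ : (inl a, inl b, inr c) ∈ gadget a b c := by simp [gadget]
  have lift : ∀ u v, arcOf (a, b, c) (u, v) → ∃ d ∈ gadget a b c, arcOf d (inl u, inl v) := by
    rintro u v (h | h | h) <;> obtain ⟨rfl, rfl⟩ := Prod.mk.inj h <;> simp [gadget, arcOf]
  -- `P` pulled back to the old list, the removed triangle standing for `c₁`.
  let Q : α × α × α → Prop := fun t =>
    (t = (a, b, c) ∧ P (inl a, inl b, inr c)) ∨ (t ∈ rest ∧ P (triMap inl t))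
  have hQ : RevClosed ((a, b, c) :: rest) Q := by
    intro t ht t' ht' u v huv hvu hQt
    rcases List.mem_cons.1 ht' with rfl | ht'
    · refine Or.inl ⟨rfl, ?_⟩
      rcases hQt with ⟨-, hc⟩ | ⟨ht, hPt⟩
      · exact hc
      · obtain ⟨d, hd, hvu'⟩ := lift v u hvu
        exact hP.imp_of_mem_gadget d hd _ hc₁ <| hP _ (triMap_inl_mem_glue ht) d
          (mem_glue_of_mem_gadget hd) _ _ (arcOf_triMap inl huv) hvu' hPt
    · refine Or.inr ⟨ht', ?_⟩
      rcases hQt with ⟨rfl, hc⟩ | ⟨ht, hPt⟩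
      · obtain ⟨d, hd, huv'⟩ := lift u v huv
        exact hP d (mem_glue_of_mem_gadget hd) _ (triMap_inl_mem_glue ht') _ _ huv'
          (arcOf_triMap inl hvu) (hP.imp_of_mem_gadget _ hc₁ d hd hc)
      · exact hP _ (triMap_inl_mem_glue ht) _ (triMap_inl_mem_glue ht') _ _
          (arcOf_triMap inl huv) (arcOf_triMap inl hvu) hPt
  have hall := h.connected Q hQ <| by
    rcases hstart with hc | ⟨t, ht, hPt⟩
    exacts [⟨_, List.mem_cons_self .., Or.inl ⟨rfl, hc⟩⟩,
      ⟨t, List.mem_cons_of_mem _ ht, Or.inr ⟨ht, hPt⟩⟩]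
  refine ⟨?_, fun t ht => ?_⟩
  · rcases hall _ (List.mem_cons_self ..) with ⟨-, hc⟩ | ⟨habc, -⟩
    exacts [hc, absurd habc h.head_notMem_tail]
  · rcases hall t (List.mem_cons_of_mem _ ht) with ⟨rfl, -⟩ | ⟨-, hPt⟩
    exacts [absurd ht h.head_notMem_tail, hPt]

theorem IrreducibleDecomp.glue (h : IrreducibleDecomp ((a, b, c) :: rest)) :
    IrreducibleDecomp (glue a b c rest) where
  nodup := by
    obtain ⟨hab, hbc, hca⟩ : a ≠ b ∧ b ≠ c ∧ c ≠ a := h.ne _ (List.mem_cons_self ..)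
    rw [arcList_glue_perm.nodup_iff, List.nodup_append, List.nodup_append]
    refine ⟨⟨h.nodup.map (inl_injective.prodMap inl_injective),
      h.nodup.map (inr_injective.prodMap inr_injective), ?_⟩, ?_, ?_⟩
    · simp
    · simp [crossArcs, hab, hbc, hca, hab.symm, hbc.symm, hca.symm]
    · simp [crossArcs]
  symm p hp := by
    rw [arcList_glue_perm.mem_iff] at hp ⊢
    simp only [List.mem_append, List.mem_map] at hp ⊢
    rcases hp with (⟨q, hq, rfl⟩ | ⟨q, hq, rfl⟩) | hp
    · exact Or.inl (Or.inl ⟨_, h.symm q hq, rfl⟩)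
    · exact Or.inl (Or.inr ⟨_, h.symm q hq, rfl⟩)
    · right
      simp only [crossArcs, List.mem_cons, List.not_mem_nil, or_false] at hp
      rcases hp with rfl | rfl | rfl | rfl | rfl | rfl | rfl | rfl | rfl | rfl | rfl | rfl <;>
        simp [crossArcs]
  ne t ht := by
    rcases mem_glue.1 ht with ⟨s, hs, rfl⟩ | ⟨s, hs, rfl⟩ | ht
    · simpa [triMap] using h.ne s (List.mem_cons_of_mem _ hs)
    · simpa [triMap] using h.ne s (List.mem_cons_of_mem _ hs)
    · obtain ⟨hab, hbc, hca⟩ : a ≠ b ∧ b ≠ c ∧ c ≠ a := h.ne _ (List.mem_cons_self ..)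
      simp only [gadget, List.mem_cons, List.not_mem_nil, or_false] at ht
      rcases ht with rfl | rfl | rfl | rfl | rfl | rfl <;> simp [hab, hbc, hca]
  connected P hP := by
    rintro ⟨t, ht, hPt⟩
    have hc₁ : (inl a, inl b, inr c) ∈ gadget a b c := by simp [gadget]
    have hc₄ : (inr a, inr b, inl c) ∈ gadget a b c := by simp [gadget]
    -- Exchanging the copies maps the glued list to itself and `c₁` to `c₄`.
    have right := h.glue_left_copy (hP.comp Sum.swap fun _ => triMap_swap_mem_glue)
    have hPc₁ : P (inl a, inl b, inr c) := by
      rcases mem_glue.1 ht with ⟨s, hs, rfl⟩ | ⟨s, hs, rfl⟩ | ht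
      · exact (h.glue_left_copy hP (Or.inr ⟨s, hs, hPt⟩)).1
      · exact hP.imp_of_mem_gadget _ hc₄ _ hc₁ (right (Or.inr ⟨s, hs, hPt⟩)).1
      · exact hP.imp_of_mem_gadget _ ht _ hc₁ hPt
    have hleft := h.glue_left_copy hP (Or.inl hPc₁)
    have hright := right (Or.inl (hP.imp_of_mem_gadget _ hc₁ _ hc₄ hPc₁))
    intro t ht
    rcases mem_glue.1 ht with ⟨s, hs, rfl⟩ | ⟨s, hs, rfl⟩ | ht
    · exact hleft.2 s hs
    · exact hright.2 s hs
    · exact hP.imp_of_mem_gadget _ hc₁ _ ht hPc₁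

end Glue

lemma Ct_succ {i : ℕ} {a b c : Vt i} {rest : List (Vt i × Vt i × Vt i)}
    (h : Ct i = (a, b, c) :: rest) : Ct (i + 1) = glue a b c rest := by
  simp only [Ct, h]
  rfl

lemma irreducibleDecomp_Ct (i : ℕ) : IrreducibleDecomp (Ct i) ∧ Ct i ≠ [] := by
  induction i with
  | zero =>
    exact ⟨irreducibleDecomp_pair (a := (0 : Fin 3)) (b := 1) (c := 2) (by decide) (by decide)
      (by decide), by simp [Ct]⟩
  | succ i ih =>
    obtain ⟨⟨a, b, c⟩, rest, h⟩ := List.exists_cons_of_ne_nil ih.2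
    rw [Ct_succ h]
    exact ⟨(h ▸ ih.1).glue, List.ne_nil_of_mem (mem_glue_of_mem_gadget (List.mem_cons_self ..))⟩

lemma card_Vt (i : ℕ) : Fintype.card (Vt i) = 3 * 2 ^ i := by
  induction i with
  | zero => rfl
  | succ i ih =>
    rw [show Fintype.card (Vt (i + 1)) = Fintype.card (Vt i ⊕ Vt i) from rfl, Fintype.card_sum, ih]
    ring

theorem stmt16 (i : ℕ) :
    Fintype.card (Vt i) = 3 * 2 ^ i ∧
    (∀ p : Vt i × Vt i, p ∈ arcList (Ct i) → (p.2, p.1) ∈ arcList (Ct i)) ∧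
    (arcList (Ct i)).Nodup ∧
    (∀ S : Finset (Vt i × Vt i × Vt i),
      S ⊆ (Ct i).toFinset → S.Nonempty → S ≠ (Ct i).toFinset →
      ∃ u v : Vt i, (∃ t ∈ S, arcOf t (u, v)) ∧ ¬ ∃ t ∈ S, arcOf t (v, u)) := by
  obtain ⟨h, -⟩ := irreducibleDecomp_Ct i
  exact ⟨card_Vt i, h.symm, h.nodup, fun _ hS hne hSL => h.exists_arcOf_not_reversed hS hne hSL⟩
end
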